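/- Let G be a finite non-nilpotent group such that the index of the Fitting subgroup Fit(G) in G is a prime p. If Γ(G) is connected, then the diameter of Γ(G) is at most 3. -/

import Mathlib

/-!
Write `F = Fit(G)` and `Z = Z_∞(G)`, and call a vertex far if it lies outside `F` and has no
neighbour in `F`. The vertices in `F` form a clique, so it suffices that no vertex is far. Since
`F ⊄ Z` (otherwise `G / Z` would be cyclic and `G` nilpotent) and `Γ(G)` is connected, it is
enough that farness passes to neighbours. So let `x` be far, `x ~ y` and `y ~ w` with `w ∈ F`.
As `G / F` has prime order and `y ∉ F`, we have `x = y ^ k * e` with `e ∈ F`; since `e` lies in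
the nilpotent group `⟨x, y⟩` and is not a neighbour of `x`, it is hypercentral. Hence `x` and `w`
both lie in `⟨y, w⟩ Z`, which is nilpotent because `Z` is hypercentral, so `x ~ w`: a
contradiction.
-/

/-- The nilpotent neighborhood of `x`: elements `y` such that `⟨x,y⟩` is nilpotent. -/
def nilNbhd {G : Type*} [Group G] (x : G) : Set G :=
  {y | Group.IsNilpotent ↥(Subgroup.closure ({x, y} : Set G))}

/-- The hypercenter of a finite group: the stable term of the upper central series. -/
noncomputable def hypercenter (G : Type*) [Group G] : Subgroup G :=
  upperCentralSeries G (Nat.card G)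

instance hypercenter_normal (G : Type*) [Group G] : (hypercenter G).Normal :=
  (inferInstance : (Subgroup.upperCentralSeries G (Nat.card G)).Normal)

/-- The graph Γ(G): induced subgraph of the nilpotent graph on `G \ Z_∞(G)`. -/
def nilGraph (G : Type*) [Group G] : SimpleGraph {x : G // x ∉ hypercenter G} where
  Adj a b := a ≠ b ∧ Group.IsNilpotent ↥(Subgroup.closure ({a.1, b.1} : Set G))
  symm := ⟨fun a b ⟨h1, h2⟩ => ⟨h1.symm, by rwa [Set.pair_comm]⟩⟩
  loopless := ⟨fun a h => h.1 rfl⟩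

/-- The commuting graph on the non-central elements. -/
def commGraph (G : Type*) [Group G] : SimpleGraph {x : G // x ∉ Subgroup.center G} where
  Adj a b := a ≠ b ∧ a.1 * b.1 = b.1 * a.1
  symm := ⟨fun a b ⟨h1, h2⟩ => ⟨h1.symm, h2.symm⟩⟩
  loopless := ⟨fun a h => h.1 rfl⟩

/-- Diameter of a connected component: diameter of the induced subgraph on its support. -/
noncomputable def compDiam {V : Type*} (Γ : SimpleGraph V) (c : Γ.ConnectedComponent) : ℕ :=
  (Γ.induce c.supp).diam

/-- `H` is a Frobenius complement in `G`. -/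
def IsFrobeniusComplement {G : Type*} [Group G] (H : Subgroup G) : Prop :=
  H ≠ ⊥ ∧ H ≠ ⊤ ∧ ∀ g : G, g ∉ H → H ⊓ H.map (MulAut.conj g).toMonoidHom = ⊥

/-- `G` is a Frobenius group. -/
def IsFrobenius (G : Type*) [Group G] : Prop :=
  ∃ H : Subgroup G, IsFrobeniusComplement H

/-- `K` is the Frobenius kernel corresponding to the complement `H`. -/
def IsFrobeniusKernelOf {G : Type*} [Group G] (K H : Subgroup G) : Prop :=
  IsFrobeniusComplement H ∧
    (K : Set G) = {1} ∪ {x : G | ∀ g : G, x ∉ H.map (MulAut.conj g).toMonoidHom}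

/-- `K` is a Frobenius kernel of `G`. -/
def IsFrobeniusKernel {G : Type*} [Group G] (K : Subgroup G) : Prop :=
  ∃ H : Subgroup G, IsFrobeniusKernelOf K H

/-- `G` is a 2-Frobenius group. -/
def IsTwoFrobenius (G : Type*) [Group G] : Prop :=
  ∃ K L : Subgroup G, ∃ hK : K.Normal, L.Normal ∧ K ≤ L ∧
    IsFrobeniusKernel (K.subgroupOf L) ∧
    (haveI := hK; IsFrobeniusKernel (Subgroup.map (QuotientGroup.mk' K) L))

/-- The Fitting subgroup: the largest normal nilpotent subgroup (of a finite group). -/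
def fitting (G : Type*) [Group G] : Subgroup G :=
  sSup {H : Subgroup G | H.Normal ∧ Group.IsNilpotent ↥H}

namespace Subgroup

variable {G : Type*} [Group G]

theorem isNilpotent_of_le {H K : Subgroup G} (hHK : H ≤ K) (hK : Group.IsNilpotent K) :
    Group.IsNilpotent H :=
  Group.nilpotent_of_mulEquiv (subgroupOfEquivOfLe hHK)

theorem _root_.isNilpotent_of_ker_le_upperCentralSeries {H : Type*} [Group H] (f : G →* H)
    {n : ℕ} (hf : f.ker ≤ upperCentralSeries G n) (hH : Group.IsNilpotent H) :
    Group.IsNilpotent G := by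
  obtain ⟨m, hm⟩ := hH
  have hcomap : ∀ k, (upperCentralSeries H k).comap f ≤ upperCentralSeries G (n + k) := by
    intro k
    induction k with
    | zero => simpa using hf
    | succ k ih =>
      intro x hx
      rw [← add_assoc, mem_upperCentralSeries_succ_iff]
      intro y
      apply ih
      simpa [map_commutatorElement] using mem_upperCentralSeries_succ_iff.mp hx (f y)
  exact ⟨n + m, eq_top_iff.mpr fun x _ ↦ hcomap m (by simp [hm])⟩

theorem upperCentralSeries_subgroupOf_le (H : Subgroup G) (n : ℕ) :
    (upperCentralSeries G n).subgroupOf H ≤ upperCentralSeries H n := by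
  induction n with
  | zero => intro x hx; simpa [mem_subgroupOf] using hx
  | succ n ih =>
    intro x hx
    rw [mem_subgroupOf, mem_upperCentralSeries_succ_iff] at hx
    exact mem_upperCentralSeries_succ_iff.mpr fun y ↦ ih (hx y)

theorem isNilpotent_sup_upperCentralSeries {K : Subgroup G} (hK : Group.IsNilpotent K) (n : ℕ) :
    Group.IsNilpotent ↥(K ⊔ upperCentralSeries G n) := by
  set U := upperCentralSeries G n
  let f : ↥(K ⊔ U) →* G ⧸ U := (QuotientGroup.mk' U).comp (K ⊔ U).subtype
  let g : K →* G ⧸ U := (QuotientGroup.mk' U).comp K.subtype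
  have hrange : f.range = g.range := by
    simp only [f, g, MonoidHom.range_comp, range_subtype, map_sup,
      (map_eq_bot_iff _).mpr (QuotientGroup.ker_mk' U).ge, sup_bot_eq]
  refine isNilpotent_of_ker_le_upperCentralSeries f.rangeRestrict (n := n) ?_ ?_
  · rw [MonoidHom.ker_rangeRestrict]
    intro x hx
    exact upperCentralSeries_subgroupOf_le _ n (by simpa [f, mem_subgroupOf] using hx)
  · rw [hrange]
    exact Group.nilpotent_of_surjective g.rangeRestrict g.rangeRestrict_surjective

theorem exists_zpow_inv_mul_mem_of_index_prime {N : Subgroup G} [N.Normal] {p : ℕ}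
    (hp : p.Prime) (hN : N.index = p) {y : G} (hy : y ∉ N) (x : G) :
    ∃ k : ℤ, (y ^ k)⁻¹ * x ∈ N := by
  have := Fact.mk hp
  have htop : zpowers (y : G ⧸ N) = ⊤ :=
    zpowers_eq_top_of_prime_card (p := p) (by rw [← hN, index_eq_card])
      (by rwa [Ne, QuotientGroup.eq_one_iff])
  obtain ⟨k, hk⟩ := mem_zpowers_iff.mp (htop ▸ mem_top (x : G ⧸ N))
  exact ⟨k, QuotientGroup.eq.mp (by rwa [QuotientGroup.mk_zpow])⟩

section Finite

variable [Finite G]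

theorem exists_normal_isPGroup_not_dvd_relIndex {N : Subgroup G} [N.Normal]
    (hN : Group.IsNilpotent N) (p : ℕ) [Fact p.Prime] :
    ∃ R : Subgroup G, R.Normal ∧ IsPGroup p R ∧ R ≤ N ∧ ¬ p ∣ R.relIndex N := by
  obtain ⟨Q⟩ := (inferInstance : Nonempty (Sylow p N))
  have : (Q : Subgroup N).Characteristic := Q.characteristic_of_normal inferInstance
  refine ⟨(Q : Subgroup N).map N.subtype, inferInstance, Q.isPGroup'.map _,
    map_subtype_le _, ?_⟩
  rw [relIndex, subgroupOf, comap_map_eq_self_of_injective N.subtype_injective]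
  exact Q.not_dvd_index

-- Fitting's theorem: `O_p(N) ⊔ O_p(M)` is a normal `p`-subgroup of `p'`-index in `N ⊔ M`,
-- hence its unique Sylow `p`-subgroup.
theorem isNilpotent_sup_of_normal {N M : Subgroup G} [N.Normal] [M.Normal]
    (hN : Group.IsNilpotent N) (hM : Group.IsNilpotent M) : Group.IsNilpotent ↥(N ⊔ M) := by
  apply (Group.isNilpotent_of_finite_tfae.out 3 0).mp
  intro p hp P
  obtain ⟨Np, _, hNp, hNpN, hNpi⟩ := exists_normal_isPGroup_not_dvd_relIndex hN p
  obtain ⟨Mp, _, hMp, hMpM, hMpi⟩ := exists_normal_isPGroup_not_dvd_relIndex hM p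
  set R := Np ⊔ Mp
  have hRp : IsPGroup p (R.subgroupOf (N ⊔ M)) :=
    (hNp.to_sup_of_normal_right hMp).of_equiv (subgroupOfEquivOfLe (sup_le_sup hNpN hMpM)).symm
  have hRi : ¬ p ∣ R.relIndex (N ⊔ M) := by
    have hM' : R.relIndex (Np ⊔ M) ∣ Mp.relIndex M := by
      rw [show Np ⊔ M = M ⊔ R by rw [sup_left_comm, sup_of_le_left hMpM, sup_comm],
        relIndex_sup_right]
      exact relIndex_dvd_of_le_left M le_sup_right
    have hN' : (Np ⊔ M).relIndex (N ⊔ M) ∣ Np.relIndex N := by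
      rw [show N ⊔ M = N ⊔ (Np ⊔ M) by rw [← sup_assoc, sup_of_le_left hNpN],
        relIndex_sup_right]
      exact relIndex_dvd_of_le_left N le_sup_left
    rw [← relIndex_mul_relIndex R (Np ⊔ M) (N ⊔ M) (sup_le_sup_left hMpM _)
      (sup_le_sup_right hNpN _)]
    intro h
    rcases hp.out.dvd_mul.mp h with h | h
    exacts [hMpi (h.trans hM'), hNpi (h.trans hN')]
  have hPR : (P : Subgroup ↥(N ⊔ M)) = R.subgroupOf (N ⊔ M) :=
    (hRp.toSylow hRi).is_maximal' P.isPGroup' (hRp.le_sylow_of_normal P)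
  rw [hPR]
  infer_instance

end Finite

end Subgroup

section Fitting

variable {G : Type*} [Group G] [Finite G]

theorem fitting_normal_and_isNilpotent : (fitting G).Normal ∧ Group.IsNilpotent (fitting G) := by
  have hsup : SupClosed {H : Subgroup G | H.Normal ∧ Group.IsNilpotent H} := by
    rintro H ⟨_, hH⟩ K ⟨_, hK⟩
    exact ⟨Subgroup.sup_normal H K, Subgroup.isNilpotent_sup_of_normal hH hK⟩
  exact hsup.sSup_mem (Set.toFinite _) ⟨inferInstance, inferInstance⟩ le_rfl

instance fitting_normal : (fitting G).Normal :=
  fitting_normal_and_isNilpotent.1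

theorem isNilpotent_fitting : Group.IsNilpotent (fitting G) :=
  fitting_normal_and_isNilpotent.2

end Fitting

theorem SimpleGraph.ediam_le_three_of_isClique {V : Type*} {Γ : SimpleGraph V} {S : Set V}
    (hS : Γ.IsClique S) (hnear : ∀ v, ∃ s ∈ S, Γ.edist v s ≤ 1) : Γ.ediam ≤ 3 := by
  refine ediam_le_of_edist_le fun u v ↦ ?_
  obtain ⟨a, haS, hua⟩ := hnear u
  obtain ⟨b, hbS, hvb⟩ := hnear v
  have hab : Γ.edist a b ≤ 1 := by
    rw [edist_le_one_iff_adj_or_eq]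
    by_cases h : a = b
    exacts [.inr h, .inl (hS haS hbS h)]
  calc Γ.edist u v ≤ Γ.edist u a + Γ.edist a b + Γ.edist b v :=
        SimpleGraph.edist_triangle.trans (add_le_add_left SimpleGraph.edist_triangle _)
    _ ≤ 1 + 1 + 1 := by gcongr; rwa [edist_comm]
    _ = 3 := by norm_num

section NilpotentGraph

variable {G : Type*} [Group G]

theorem nilGraph_adj_of_mem {a b : {x : G // x ∉ hypercenter G}} (hab : a ≠ b) {K : Subgroup G}
    (hK : Group.IsNilpotent K) (ha : a.1 ∈ K) (hb : b.1 ∈ K) : (nilGraph G).Adj a b :=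
  ⟨hab, Subgroup.isNilpotent_of_le
    ((Subgroup.closure_le K).mpr (by rintro _ (rfl | rfl) <;> assumption)) hK⟩

theorem exists_mem_fitting_not_mem_hypercenter [Finite G] (hnn : ¬ Group.IsNilpotent G) {p : ℕ}
    (hp : p.Prime) (hi : (fitting G).index = p) : ∃ c ∈ fitting G, c ∉ hypercenter G := by
  by_contra! hFZ
  have := Fact.mk hp
  have : IsCyclic (G ⧸ hypercenter G) := isCyclic_of_card_dvd_prime (p := p)
    (by rw [← Subgroup.index_eq_card, ← hi]; exact Subgroup.index_dvd_of_le hFZ)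
  let _ : CommGroup (G ⧸ hypercenter G) := IsCyclic.commGroup
  exact hnn (isNilpotent_of_ker_le_upperCentralSeries (QuotientGroup.mk' (hypercenter G))
    (QuotientGroup.ker_mk' _).le CommGroup.isNilpotent)

def IsFarFromFitting (x : {x : G // x ∉ hypercenter G}) : Prop :=
  x.1 ∉ fitting G ∧ ∀ y, (nilGraph G).Adj x y → y.1 ∉ fitting G

theorem IsFarFromFitting.mem_hypercenter {x : {x : G // x ∉ hypercenter G}}
    (hx : IsFarFromFitting x) {K : Subgroup G} (hK : Group.IsNilpotent K) (hxK : x.1 ∈ K)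
    {s : G} (hsK : s ∈ K) (hsF : s ∈ fitting G) : s ∈ hypercenter G := by
  by_contra hsZ
  refine hx.2 ⟨s, hsZ⟩ (nilGraph_adj_of_mem ?_ hK hxK hsK) hsF
  rintro rfl
  exact hx.1 hsF

variable [Finite G] {p : ℕ}

theorem IsFarFromFitting.of_adj (hp : p.Prime) (hi : (fitting G).index = p)
    {x y : {x : G // x ∉ hypercenter G}} (hx : IsFarFromFitting x) (hxy : (nilGraph G).Adj x y) :
    IsFarFromFitting y := by
  have hyF : y.1 ∉ fitting G := hx.2 y hxy
  refine ⟨hyF, fun w hyw hwF ↦ ?_⟩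
  have mem_left {a b : G} : a ∈ Subgroup.closure {a, b} := Subgroup.subset_closure (.inl rfl)
  have mem_right {a b : G} : b ∈ Subgroup.closure {a, b} := Subgroup.subset_closure (.inr rfl)
  obtain ⟨k, hk⟩ := Subgroup.exists_zpow_inv_mul_mem_of_index_prime hp hi hyF x.1
  have hkZ : (y.1 ^ k)⁻¹ * x.1 ∈ hypercenter G :=
    hx.mem_hypercenter hxy.2 mem_left (mul_mem (inv_mem (zpow_mem mem_right k)) mem_left) hk
  have hxK : x.1 ∈ Subgroup.closure {y.1, w.1} ⊔ hypercenter G := by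
    rw [show x.1 = y.1 ^ k * ((y.1 ^ k)⁻¹ * x.1) by group]
    exact mul_mem (Subgroup.mem_sup_left (zpow_mem mem_left k)) (Subgroup.mem_sup_right hkZ)
  refine hx.2 w (nilGraph_adj_of_mem ?_ (Subgroup.isNilpotent_sup_upperCentralSeries hyw.2 _) hxK
    (Subgroup.mem_sup_left mem_right)) hwF
  rintro rfl
  exact hx.1 hwF

theorem not_isFarFromFitting (hnn : ¬ Group.IsNilpotent G) (hp : p.Prime)
    (hi : (fitting G).index = p) (hc : (nilGraph G).Connected)
    (x : {x : G // x ∉ hypercenter G}) :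
    ¬ IsFarFromFitting x := by
  intro hx
  obtain ⟨c, hcF, hcZ⟩ := exists_mem_fitting_not_mem_hypercenter hnn hp hi
  have hfar (v) (hv : Relation.ReflTransGen (nilGraph G).Adj x v) : IsFarFromFitting v := by
    induction hv with
    | refl => exact hx
    | tail _ hab ih => exact ih.of_adj hp hi hab
  have hreach := (SimpleGraph.reachable_iff_reflTransGen _ _).mp (hc.preconnected x ⟨c, hcZ⟩)
  exact (hfar _ hreach).1 hcF

theorem exists_mem_fitting_edist_le_one (hnn : ¬ Group.IsNilpotent G) (hp : p.Prime)
    (hi : (fitting G).index = p) (hc : (nilGraph G).Connected)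
    (x : {x : G // x ∉ hypercenter G}) :
    ∃ c : {x : G // x ∉ hypercenter G}, c.1 ∈ fitting G ∧ (nilGraph G).edist x c ≤ 1 := by
  by_cases hxF : x.1 ∈ fitting G
  · exact ⟨x, hxF, by simp⟩
  · obtain ⟨c, hxc, hcF⟩ : ∃ c, (nilGraph G).Adj x c ∧ c.1 ∈ fitting G := by
      simpa [IsFarFromFitting, hxF] using not_isFarFromFitting hnn hp hi hc x
    exact ⟨c, hcF, (SimpleGraph.edist_eq_one_iff_adj.mpr hxc).le⟩

theorem isClique_fitting :
    (nilGraph G).IsClique {c : {x : G // x ∉ hypercenter G} | c.1 ∈ fitting G} :=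
  fun _ ha _ hb hab ↦ nilGraph_adj_of_mem hab isNilpotent_fitting ha hb

end NilpotentGraph

/-- If the Fitting subgroup has prime index and Γ(G) is connected, diam ≤ 3. -/
theorem stmt_17 (G : Type*) [Group G] [Finite G] (hnn : ¬ Group.IsNilpotent G)
    (p : ℕ) (hp : p.Prime) (hi : (fitting G).index = p)
    (hc : (nilGraph G).Connected) :
    (nilGraph G).diam ≤ 3 :=
  ENat.toNat_le_of_le_natCast <| SimpleGraph.ediam_le_three_of_isClique isClique_fitting
    (exists_mem_fitting_edist_le_one hnn hp hi hc)
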